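/- arXiv:2510.27445 — 2 statements merged into one kernel-verified Lean document; each statement's English description precedes it below -/
import Mathlib

section
/- A linear bijection φ on se(2) = R ×_J R^2, written in block form, is a Lie algebra automorphism if and only if φ = [[ε,0],[η,P]] where ε = ±1, η ∈ R^2, and P ∈ GL(2,R) satisfies PJ = εJP, with J = [[0,-1],[1,0]]. -/
/-!
The bracket takes values in `0 × ℝ²`, and every `(0, v)` is a bracket (`(0, v) = [(1, 0), (0, -Jv)]`),
so `0 × ℝ²` is the derived algebra and any automorphism preserves it; this forces the block form
`φ = [[ε, 0], [η, P]]`. Comparing `φ [(1, 0), (0, w)]` with `[φ (1, 0), φ (0, w)]` gives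
`P J = ε J P`, and taking determinants (`det J = 1`, `det P ≠ 0`) gives `ε² = 1`.
Conversely, for a map of this block form the `η`-contributions to `[φ x, φ y]` cancel.
-/

/-- J = [[0,-1],[1,0]] -/
def J : Matrix (Fin 2) (Fin 2) ℝ := !![0, -1; 1, 0]

/-- se(2) = ℝ ×_J ℝ² with bracket [(s,v),(t,w)] = (0, sJw - tJv). -/
abbrev se2 := ℝ × (Fin 2 → ℝ)

def se2Br (x y : se2) : se2 :=
  (0, x.1 • J.mulVec y.2 - y.1 • J.mulVec x.2)

open scoped Matrix

lemma J_mul_J : J * J = -1 := by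
  ext i j
  fin_cases i <;> fin_cases j <;> simp [J]

lemma J_mulVec_J_mulVec (v : Fin 2 → ℝ) : J *ᵥ (J *ᵥ v) = -v := by
  rw [Matrix.mulVec_mulVec, J_mul_J, Matrix.neg_mulVec, Matrix.one_mulVec]

lemma isUnit_J : IsUnit J := by
  simp [Matrix.isUnit_iff_isUnit_det, J, Matrix.det_fin_two_of]

theorem Matrix.pow_card_eq_one_of_mul_eq_smul_mul {n R : Type*} [Fintype n] [DecidableEq n]
    [CommRing R] {A B : Matrix n n R} {a : R} (hA : IsUnit A) (hB : IsUnit B)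
    (h : A * B = a • (B * A)) : a ^ Fintype.card n = 1 := by
  have hdet := congrArg Matrix.det h
  rw [Matrix.det_mul, Matrix.det_smul, Matrix.det_mul, mul_comm B.det] at hdet
  have hAB : IsUnit (A.det * B.det) :=
    ((Matrix.isUnit_iff_isUnit_det A).mp hA).mul ((Matrix.isUnit_iff_isUnit_det B).mp hB)
  rw [← hAB.mul_left_inj, one_mul]
  exact hdet.symm

namespace se2

def PreservesBr (φ : se2 → se2) : Prop :=
  ∀ x y, φ (se2Br x y) = se2Br (φ x) (φ y)

lemma fst_se2Br (x y : se2) : (se2Br x y).1 = 0 := rfl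

lemma se2Br_one_zero (w : Fin 2 → ℝ) : se2Br (1, 0) (0, w) = (0, J *ᵥ w) := by
  simp [se2Br]

lemma exists_se2Br_eq (v : Fin 2 → ℝ) : ∃ x y, se2Br x y = (0, v) :=
  ⟨(1, 0), (0, -(J *ᵥ v)), by rw [se2Br_one_zero, Matrix.mulVec_neg, J_mulVec_J_mulVec, neg_neg]⟩

lemma map_mk (φ : se2 →ₗ[ℝ] se2) (s : ℝ) (v : Fin 2 → ℝ) :
    φ (s, v) = s • φ (1, 0) + φ (0, v) := by
  rw [← map_smul, ← map_add]
  simp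

/-- The block `P` of `φ = [[ε, 0], [η, P]]`. -/
def lowerRightBlock (φ : se2 →ₗ[ℝ] se2) : Matrix (Fin 2) (Fin 2) ℝ :=
  LinearMap.toMatrix' (LinearMap.snd ℝ ℝ (Fin 2 → ℝ) ∘ₗ φ ∘ₗ LinearMap.inr ℝ ℝ (Fin 2 → ℝ))

lemma lowerRightBlock_mulVec (φ : se2 →ₗ[ℝ] se2) (v : Fin 2 → ℝ) :
    lowerRightBlock φ *ᵥ v = (φ (0, v)).2 :=
  LinearMap.toMatrix'_mulVec _ v

lemma preservesBr_of_blockForm {φ : se2 → se2} {ε : ℝ} {η : Fin 2 → ℝ}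
    {P : Matrix (Fin 2) (Fin 2) ℝ} (hPJ : P * J = ε • (J * P))
    (hφ : ∀ s v, φ (s, v) = (ε * s, s • η + P *ᵥ v)) : PreservesBr φ := by
  rintro ⟨s, v⟩ ⟨t, w⟩
  have hP (u : Fin 2 → ℝ) : P *ᵥ (J *ᵥ u) = ε • J *ᵥ (P *ᵥ u) := by
    rw [Matrix.mulVec_mulVec, hPJ, Matrix.smul_mulVec, Matrix.mulVec_mulVec]
  simp only [se2Br, hφ, mul_zero, zero_smul, zero_add, Matrix.mulVec_sub, Matrix.mulVec_smul,
    Matrix.mulVec_add, hP, Prod.mk.injEq, true_and]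
  module

variable {φ : se2 →ₗ[ℝ] se2}

lemma fst_map_zero_mk (hφ : PreservesBr φ) (v : Fin 2 → ℝ) : (φ (0, v)).1 = 0 := by
  obtain ⟨x, y, hxy⟩ := exists_se2Br_eq v
  rw [← hxy, hφ, fst_se2Br]

lemma map_zero_mk (hφ : PreservesBr φ) (v : Fin 2 → ℝ) :
    φ (0, v) = (0, lowerRightBlock φ *ᵥ v) :=
  Prod.ext (fst_map_zero_mk hφ v) (lowerRightBlock_mulVec φ v).symm

lemma map_mk_eq_blockForm (hφ : PreservesBr φ) (s : ℝ) (v : Fin 2 → ℝ) :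
    φ (s, v) = ((φ (1, 0)).1 * s, s • (φ (1, 0)).2 + lowerRightBlock φ *ᵥ v) := by
  rw [map_mk, map_zero_mk hφ]
  ext <;> simp [mul_comm]

lemma lowerRightBlock_mul_J (hφ : PreservesBr φ) :
    lowerRightBlock φ * J = (φ (1, 0)).1 • (J * lowerRightBlock φ) := by
  refine Matrix.ext_iff_mulVec.mpr fun w ↦ ?_
  have h := congrArg Prod.snd (hφ (1, 0) (0, w))
  rw [se2Br_one_zero, map_zero_mk hφ, map_zero_mk hφ] at h
  simp only [se2Br, zero_smul, sub_zero] at h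
  rw [← Matrix.mulVec_mulVec, h, Matrix.smul_mulVec, Matrix.mulVec_mulVec]

lemma isUnit_lowerRightBlock (hφ : PreservesBr φ) (hinj : Function.Injective φ) :
    IsUnit (lowerRightBlock φ) := by
  rw [← Matrix.mulVec_injective_iff_isUnit]
  intro v w hvw
  have h : φ (0, v) = φ (0, w) := by
    rw [map_zero_mk hφ, map_zero_mk hφ]
    exact congrArg _ hvw
  exact congrArg Prod.snd (hinj h)

end se2

/-- A linear bijection φ of se(2) is a Lie algebra automorphism iff, in block
form, φ = [[ε,0],[η,P]] with ε = ±1, η ∈ ℝ² and P ∈ GL(2,ℝ) with PJ = εJP. -/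
theorem stmt7 (φ : se2 ≃ₗ[ℝ] se2) :
    (∀ x y, φ (se2Br x y) = se2Br (φ x) (φ y)) ↔
    ∃ (ε : ℝ) (η : Fin 2 → ℝ) (P : Matrix (Fin 2) (Fin 2) ℝ),
      (ε = 1 ∨ ε = -1) ∧ IsUnit P ∧ P * J = ε • (J * P) ∧
      ∀ (s : ℝ) (v : Fin 2 → ℝ), φ (s, v) = (ε * s, s • η + P.mulVec v) := by
  constructor
  · intro hφ
    have hφ : se2.PreservesBr (φ : se2 →ₗ[ℝ] se2) := hφ
    have hPJ := se2.lowerRightBlock_mul_J hφ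
    have hP := se2.isUnit_lowerRightBlock hφ φ.injective
    have hε := Matrix.pow_card_eq_one_of_mul_eq_smul_mul hP isUnit_J hPJ
    rw [Fintype.card_fin, sq_eq_one_iff] at hε
    exact ⟨_, _, _, hε, hP, hPJ, se2.map_mk_eq_blockForm hφ⟩
  · rintro ⟨ε, η, P, -, -, hPJ, hφ⟩
    exact se2.preservesBr_of_blockForm hPJ hφ
end

section
/- Every derivation of g = se(2) × R has block form D = [[0,0,0],[ξ,A,0],[a,0,r]] with ξ ∈ R^2, a,r ∈ R, and A ∈ gl(2,R) with AJ = JA; conversely every such block matrix is a derivation of g. -/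
/-- g = se(2) × ℝ, elements written (s, v, c) ∈ ℝ × ℝ² × ℝ. -/
abbrev gLie := ℝ × (Fin 2 → ℝ) × ℝ

/-- Bracket on g = se(2) × ℝ: [(X,a),(Y,b)] = ([X,Y], 0), where the
se(2)-bracket is [(s,v),(t,w)] = (0, sJw - tJv). -/
def gBr (x y : gLie) : gLie :=
  (0, x.1 • J.mulVec y.2.1 - y.1 • J.mulVec x.2.1, 0)

/-!
A derivation `D` preserves the centre `0 × 0 × ℝ` and the derived algebra `0 × ℝ² × 0`
(each of whose elements is a bracket with `(1, 0, 0)`), so it has the claimed block form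
except possibly for the entry `p = (D (1, 0, 0)).1`. Applying `D` to
`[(1, 0, 0), (0, v, 0)] = (0, J v, 0)` gives `A J = p J + J A`; since `A J - J A` is symmetric
and `J` is antisymmetric, `p = 0` and `A J = J A`. Conversely, for a block map the derivation
identity reduces to `A (s J w - t J v) = s J A w - t J A v`, which is `A J = J A`.
-/

open scoped Matrix

lemma eq_zero_of_mul_J_eq_smul_J_add {A : Matrix (Fin 2) (Fin 2) ℝ} {p : ℝ}
    (h : A * J = p • J + J * A) : p = 0 := by
  rw [Matrix.eta_fin_two A] at h
  simp [J, Matrix.smul_of] at h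
  linarith

lemma gBr_fst (x y : gLie) : (gBr x y).1 = 0 := rfl

lemma gBr_snd_snd (x y : gLie) : (gBr x y).2.2 = 0 := rfl

lemma gBr_one_neg_J_mulVec (v : Fin 2 → ℝ) : gBr (1, 0, 0) (0, -(J *ᵥ v), 0) = (0, v, 0) := by
  simp only [gBr, one_smul, zero_smul, sub_zero, Matrix.mulVec_neg, J_mulVec_J_mulVec, neg_neg]

lemma gBr_center_left (c : ℝ) (y : gLie) : gBr (0, 0, c) y = 0 := by
  simp [gBr]

lemma gBr_center_right (x : gLie) (c : ℝ) : gBr x (0, 0, c) = 0 := by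
  simp [gBr]

lemma eq_center_of_forall_gBr_eq_zero {x : gLie} (h : ∀ y, gBr x y = 0) :
    x = (0, 0, x.2.2) := by
  have hv : J *ᵥ x.2.1 = 0 := by
    simpa only [gBr, Matrix.mulVec_zero, smul_zero, one_smul, zero_sub, neg_eq_zero,
      Prod.snd_zero, Prod.fst_zero] using congrArg (·.2.1) (h (1, 0, 0))
  have hs : x.1 = 0 := by simpa [gBr, J] using congrArg (·.2.1 1) (h (0, Pi.single 0 1, 0))
  have hv' : x.2.1 = 0 := by simpa [hv] using J_mulVec_J_mulVec x.2.1
  ext <;> simp [hs, hv']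

namespace gLie

lemma mk_eq_add (s : ℝ) (v : Fin 2 → ℝ) (c : ℝ) :
    ((s, v, c) : gLie) = s • (1, 0, 0) + (0, v, 0) + c • (0, 0, 1) := by
  simp

def IsDerivation (D : gLie →ₗ[ℝ] gLie) : Prop :=
  ∀ x y, D (gBr x y) = gBr (D x) y + gBr x (D y)

def translationBlock (D : gLie →ₗ[ℝ] gLie) : Matrix (Fin 2) (Fin 2) ℝ :=
  LinearMap.toMatrix' (LinearMap.fst ℝ _ ℝ ∘ₗ LinearMap.snd ℝ ℝ _ ∘ₗ D ∘ₗ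
    LinearMap.inr ℝ ℝ _ ∘ₗ LinearMap.inl ℝ _ ℝ)

lemma translationBlock_mulVec (D : gLie →ₗ[ℝ] gLie) (v : Fin 2 → ℝ) :
    translationBlock D *ᵥ v = (D (0, v, 0)).2.1 := by
  simp [translationBlock, LinearMap.toMatrix'_mulVec]

namespace IsDerivation

variable {D : gLie →ₗ[ℝ] gLie}

lemma map_center (hD : IsDerivation D) (c : ℝ) : D (0, 0, c) = (0, 0, (D (0, 0, c)).2.2) := by
  refine eq_center_of_forall_gBr_eq_zero fun y => ?_
  simpa [gBr_center_left, gBr_center_right] using (hD (0, 0, c) y).symm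

lemma map_derived (hD : IsDerivation D) (v : Fin 2 → ℝ) :
    D (0, v, 0) = (0, translationBlock D *ᵥ v, 0) := by
  rw [translationBlock_mulVec, ← gBr_one_neg_J_mulVec, hD]
  ext <;> simp [gBr_fst, gBr_snd_snd]

lemma translationBlock_mul_J_eq_smul_add (hD : IsDerivation D) :
    translationBlock D * J = (D (1, 0, 0)).1 • J + J * translationBlock D := by
  refine Matrix.ext_iff_mulVec.2 fun v => ?_
  have := congrArg (·.2.1) (hD (1, 0, 0) (0, v, 0))
  simpa only [gBr, hD.map_derived, zero_smul, one_smul, sub_zero, Matrix.mulVec_mulVec,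
    Matrix.add_mulVec, Matrix.smul_mulVec, Prod.snd_add, Prod.fst_add] using this

lemma fst_map_one (hD : IsDerivation D) : (D (1, 0, 0)).1 = 0 :=
  eq_zero_of_mul_J_eq_smul_J_add hD.translationBlock_mul_J_eq_smul_add

lemma translationBlock_mul_J (hD : IsDerivation D) :
    translationBlock D * J = J * translationBlock D := by
  simpa [hD.fst_map_one] using hD.translationBlock_mul_J_eq_smul_add

lemma map_mk (hD : IsDerivation D) (s : ℝ) (v : Fin 2 → ℝ) (c : ℝ) :
    D (s, v, c) = (0, s • (D (1, 0, 0)).2.1 + translationBlock D *ᵥ v,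
      (D (1, 0, 0)).2.2 * s + (D (0, 0, 1)).2.2 * c) := by
  have map_one : D (1, 0, 0) = (0, (D (1, 0, 0)).2.1, (D (1, 0, 0)).2.2) :=
    Prod.ext hD.fst_map_one rfl
  rw [mk_eq_add, map_add, map_add, map_smul, map_smul, hD.map_derived, hD.map_center, map_one]
  simp only [Prod.smul_mk, Prod.mk_add_mk, smul_zero, add_zero, smul_eq_mul, mul_zero, mul_comm]

end IsDerivation

lemma isDerivation_of_forall_map_mk {D : gLie →ₗ[ℝ] gLie} {ξ : Fin 2 → ℝ}
    {A : Matrix (Fin 2) (Fin 2) ℝ} {a r : ℝ} (hAJ : A * J = J * A)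
    (hD : ∀ s v c, D (s, v, c) = (0, s • ξ + A *ᵥ v, a * s + r * c)) :
    IsDerivation D := by
  rintro ⟨s, v, c⟩ ⟨t, w, d⟩
  simp only [gBr, hD, Prod.mk_add_mk, zero_smul, zero_add, mul_zero, add_zero, zero_sub, sub_zero,
    Matrix.mulVec_sub, Matrix.mulVec_add, Matrix.mulVec_smul, Matrix.mulVec_mulVec, hAJ]
  congr 2
  module

end gLie

/-- A linear map D on g = se(2) × ℝ is a derivation iff, in 1+2+1 block form,
D = [[0,0,0],[ξ,A,0],[a,0,r]] with ξ ∈ ℝ², a, r ∈ ℝ and AJ = JA. -/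
theorem stmt8 (D : gLie →ₗ[ℝ] gLie) :
    (∀ x y, D (gBr x y) = gBr (D x) y + gBr x (D y)) ↔
    ∃ (ξ : Fin 2 → ℝ) (A : Matrix (Fin 2) (Fin 2) ℝ) (a r : ℝ),
      A * J = J * A ∧
      ∀ (s : ℝ) (v : Fin 2 → ℝ) (c : ℝ),
        D (s, v, c) = (0, s • ξ + A.mulVec v, a * s + r * c) :=
  ⟨fun (hD : gLie.IsDerivation D) => ⟨_, _, _, _, hD.translationBlock_mul_J, hD.map_mk⟩,
    fun ⟨_, _, _, _, hAJ, hD⟩ => gLie.isDerivation_of_forall_map_mk hAJ hD⟩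
end
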